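/- arXiv:1312.4583 — 3 statements merged into one kernel-verified Lean document; each statement's English description precedes it below -/
import Mathlib

section
/- Equality in the uncertainty relation ‖(A-a)u‖·‖(B-b)u‖ = (1/2)·|⟨(AB-BA)u, u⟩| holds if (A-a)u + i·r·(B-b)u = 0 for some real r. -/
open scoped ComplexInnerProductSpace

/-!
Write `x = (A - a)u` and `y = (B - b)u`. Shifting by real scalars changes neither self-adjointness
nor the commutator, so `⟪[A, B]u, u⟫ = ⟪y, x⟫ - ⟪x, y⟫`. The hypothesis says `x = c • y` with
`c = -ir` purely imaginary, and then `⟪y, x⟫ - ⟪x, y⟫ = (c - c̄)‖y‖²` has norm exactly `2‖c‖‖y‖² = 2‖x‖‖y‖`.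
-/

theorem commutator_sub_smul_one {𝕜 R : Type*} [CommSemiring 𝕜] [Ring R] [Algebra 𝕜 R]
    (x y : R) (a b : 𝕜) :
    (x - a • 1) * (y - b • 1) - (y - b • 1) * (x - a • 1) = x * y - y * x := by
  simp only [Algebra.smul_def, mul_one, sub_mul, mul_sub]
  rw [Algebra.commutes a y, Algebra.commutes b x, ← map_mul, ← map_mul, mul_comm a b]
  abel

theorem Complex.norm_eq_abs_im_of_re_eq_zero {c : ℂ} (hc : c.re = 0) : ‖c‖ = |c.im| := by
  simp [Complex.norm_def, Complex.normSq_apply, hc, Real.sqrt_mul_self_eq_abs]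

section

variable {E : Type*} [NormedAddCommGroup E] [InnerProductSpace ℂ E]

theorem norm_inner_smul_sub_inner_smul_of_re_eq_zero {c : ℂ} (hc : c.re = 0) (y : E) :
    ‖⟪y, c • y⟫ - ⟪c • y, y⟫‖ = 2 * ‖c • y‖ * ‖y‖ := by
  have hyy : ⟪y, y⟫ = ((‖y‖ ^ 2 : ℝ) : ℂ) := by exact_mod_cast inner_self_eq_norm_sq_to_K y
  rw [inner_smul_right, inner_smul_left, hyy, ← sub_mul, Complex.sub_conj, norm_mul, norm_mul,
    Complex.norm_I, Complex.norm_real, Complex.norm_real, norm_smul,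
    Complex.norm_eq_abs_im_of_re_eq_zero hc]
  simp only [Real.norm_eq_abs, abs_mul, abs_two, abs_pow, abs_norm]
  ring

variable [CompleteSpace E]

theorem IsSelfAdjoint.sub_ofReal_smul_one {T : E →L[ℂ] E} (hT : IsSelfAdjoint T) (a : ℝ) :
    IsSelfAdjoint (T - (a : ℂ) • 1) :=
  hT.sub ((IsSelfAdjoint.all a).algebraMap _)

theorem ContinuousLinearMap.inner_commutator_apply_self {T S : E →L[ℂ] E}
    (hT : IsSelfAdjoint T) (hS : IsSelfAdjoint S) (u : E) :
    ⟪(T * S - S * T) u, u⟫ = ⟪S u, T u⟫ - ⟪T u, S u⟫ := by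
  rw [sub_apply, mul_apply_eq_comp, mul_apply_eq_comp, inner_sub_left]
  exact congrArg₂ (· - ·) (hT.isSymmetric (S u) u) (hS.isSymmetric (T u) u)

end

theorem uncertainty_equality_of_annihilation
    {H : Type*} [NormedAddCommGroup H] [InnerProductSpace ℂ H] [CompleteSpace H]
    (A B : H →L[ℂ] H) (hA : IsSelfAdjoint A) (hB : IsSelfAdjoint B)
    (a b : ℝ) (u : H)
    (h : ∃ r : ℝ, (A - (a : ℂ) • 1) u + ((Complex.I * r) : ℂ) • (B - (b : ℂ) • 1) u = 0) :
    ‖(A - (a : ℂ) • 1) u‖ * ‖(B - (b : ℂ) • 1) u‖ =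
      (1 / 2) * ‖⟪(A ∘L B - B ∘L A) u, u⟫‖ := by
  obtain ⟨r, hr⟩ := h
  have hx : (A - (a : ℂ) • 1) u = (-(Complex.I * r)) • (B - (b : ℂ) • 1) u := by
    rw [neg_smul, eq_neg_iff_add_eq_zero, hr]
  have hc : (-(Complex.I * r)).re = 0 := by simp
  rw [← ContinuousLinearMap.mul_def, ← ContinuousLinearMap.mul_def,
    ← commutator_sub_smul_one A B (a : ℂ) (b : ℂ),
    ContinuousLinearMap.inner_commutator_apply_self (hA.sub_ofReal_smul_one a)
      (hB.sub_ofReal_smul_one b),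
    hx, norm_inner_smul_sub_inner_smul_of_re_eq_zero hc]
  ring
end

section
/- If equality ‖(A-a)u‖·‖(B-b)u‖ = (1/2)·|⟨(AB-BA)u, u⟩| holds with both factors nonzero, then (A-a)u and (B-b)u are proportional by a purely imaginary scalar, i.e., there exists r ∈ ℝ, r ≠ 0, with (A-a)u = i·r·(B-b)u. -/
/-!
Write `f = (A - a) u` and `g = (B - b) u`. Shifting by real scalars does not change the
commutator, and for symmetric operators `⟪[A, B] u, u⟫ = ⟪g, f⟫ - conj ⟪g, f⟫ = 2 i Im ⟪g, f⟫`.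
The hypothesis therefore reads `‖f‖ ‖g‖ = |Im ⟪g, f⟫|`, which squeezes the Cauchy–Schwarz chain
`|Im ⟪g, f⟫| ≤ |⟪g, f⟫| ≤ ‖g‖ ‖f‖` into equalities: the second one makes `f = c • g`, and the
first one forces `⟪g, f⟫ = c ‖g‖²`, hence `c`, to be purely imaginary.
-/

open scoped ComplexInnerProductSpace

theorem sub_smul_one_mul_sub_smul_one_sub {R A : Type*} [CommRing R] [Ring A] [Algebra R A]
    (x y : A) (s t : R) :
    (x - s • 1) * (y - t • 1) - (y - t • 1) * (x - s • 1) = x * y - y * x := by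
  simp only [sub_mul, mul_sub, smul_sub, smul_mul_assoc, mul_smul_comm, one_mul, mul_one,
    smul_smul, mul_comm s t]
  abel

section InnerProduct

variable {E : Type*} [NormedAddCommGroup E] [InnerProductSpace ℂ E]

theorem LinearMap.IsSymmetric.norm_inner_commutator_apply_self {S T : E →L[ℂ] E}
    (hS : (S : E →ₗ[ℂ] E).IsSymmetric) (hT : (T : E →ₗ[ℂ] E).IsSymmetric) (u : E) :
    ‖⟪(S ∘L T - T ∘L S) u, u⟫‖ = 2 * |(⟪T u, S u⟫).im| := by
  have h : ⟪(S ∘L T - T ∘L S) u, u⟫ = ⟪T u, S u⟫ - (starRingEnd ℂ) ⟪T u, S u⟫ := by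
    rw [_root_.sub_apply, inner_sub_left, ContinuousLinearMap.comp_apply,
      ContinuousLinearMap.comp_apply, inner_conj_symm]
    exact congrArg₂ _ (hS (T u) u) (hT (S u) u)
  rw [h, Complex.sub_conj, norm_mul, Complex.norm_I, Complex.norm_real, Real.norm_eq_abs,
    abs_mul, abs_two, mul_one]

theorem exists_smul_eq_I_mul_of_norm_mul_norm_eq_abs_im_inner {x y : E} (hx : x ≠ 0)
    (hy : y ≠ 0) (h : ‖x‖ * ‖y‖ = |(⟪y, x⟫).im|) :
    ∃ r : ℝ, r ≠ 0 ∧ x = (Complex.I * r : ℂ) • y := by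
  rw [mul_comm] at h
  have him_le := Complex.abs_im_le_norm ⟪y, x⟫
  have hCS_le := norm_inner_le_norm (𝕜 := ℂ) y x
  have hCS : ‖⟪y, x⟫‖ = ‖y‖ * ‖x‖ := by linarith
  have him : |(⟪y, x⟫).im| = ‖⟪y, x⟫‖ := by linarith
  obtain ⟨c, hc, rfl⟩ := (norm_inner_eq_norm_iff hy hx).mp hCS
  have hre : c.re = 0 := by
    have hinner_re : (⟪y, c • y⟫).re = 0 := Complex.abs_im_eq_norm.mp him
    rw [inner_smul_right, inner_self_eq_norm_sq_to_K, RCLike.ofReal_eq_complex_ofReal,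
      ← Complex.ofReal_pow, Complex.re_mul_ofReal] at hinner_re
    exact (mul_eq_zero.mp hinner_re).resolve_right (by positivity)
  refine ⟨c.im, fun him_zero => hc (Complex.ext hre him_zero), ?_⟩
  congr 1
  apply Complex.ext <;> simp [hre]

end InnerProduct

theorem proportional_of_uncertainty_equality
    {H : Type*} [NormedAddCommGroup H] [InnerProductSpace ℂ H] [CompleteSpace H]
    (A B : H →L[ℂ] H) (hA : IsSelfAdjoint A) (hB : IsSelfAdjoint B)
    (a b : ℝ) (u : H)
    (hAu : (A - (a : ℂ) • 1) u ≠ 0) (hBu : (B - (b : ℂ) • 1) u ≠ 0)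
    (heq : ‖(A - (a : ℂ) • 1) u‖ * ‖(B - (b : ℂ) • 1) u‖ =
      (1 / 2) * ‖⟪(A ∘L B - B ∘L A) u, u⟫‖) :
    ∃ r : ℝ, r ≠ 0 ∧ (A - (a : ℂ) • 1) u = ((Complex.I * r) : ℂ) • (B - (b : ℂ) • 1) u := by
  have hshift (s : ℝ) : IsSelfAdjoint ((s : ℂ) • (1 : H →L[ℂ] H)) :=
    IsSelfAdjoint.smul (Complex.conj_ofReal s) (IsSelfAdjoint.one _)
  have hcomm : A ∘L B - B ∘L A =
      (A - (a : ℂ) • 1) ∘L (B - (b : ℂ) • 1) - (B - (b : ℂ) • 1) ∘L (A - (a : ℂ) • 1) :=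
    (sub_smul_one_mul_sub_smul_one_sub A B (a : ℂ) b).symm
  rw [hcomm, ((hA.sub (hshift a)).isSymmetric.norm_inner_commutator_apply_self
    (hB.sub (hshift b)).isSymmetric u), one_div, inv_mul_cancel_left₀ two_ne_zero] at heq
  exact exists_smul_eq_I_mul_of_norm_mul_norm_eq_abs_im_inner hAu hBu heq
end

section
/- If a smooth function ṽ on the open unit disk satisfies (-(1/2) w + (1 - |w|²) ∂_w̄) ṽ(w) = 0, then V(w) = √(1 - w·w̄) · ṽ(w) satisfies ∂_w̄ V = 0, i.e. V is holomorphic on the unit disk. -/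
open Complex

theorem hardy_image_is_holomorphic
    (v : ℂ → ℂ) (hv : ∀ w : ℂ, ‖w‖ < 1 → ContDiffAt ℝ (⊤ : ℕ∞) v w)
    (hann : ∀ w : ℂ, ‖w‖ < 1 →
      -(1 / 2 : ℂ) * w * v w
        + (1 - ‖w‖ ^ 2) * ((1 / 2 : ℂ) * (fderiv ℝ v w 1 + Complex.I * fderiv ℝ v w Complex.I)) = 0) :
    ∀ w : ℂ, ‖w‖ < 1 →
      let V : ℂ → ℂ := fun u => (Real.sqrt (1 - Complex.normSq u) : ℂ) * v u
      (1 / 2 : ℂ) * (fderiv ℝ V w 1 + Complex.I * fderiv ℝ V w Complex.I) = 0 := by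
  intro w hw
  intro V
  have hns : Complex.normSq w = ‖w‖ ^ 2 := by
    rw [← Complex.sq_norm]
  have hrpos : 0 < 1 - Complex.normSq w := by
    rw [hns]
    nlinarith [norm_nonneg w]
  set r : ℝ := 1 - Complex.normSq w with hrdef
  set s : ℝ := Real.sqrt r with hsdef
  have hspos : 0 < s := Real.sqrt_pos.mpr hrpos
  have hs2 : s ^ 2 = r := Real.sq_sqrt hrpos.le
  -- derivative of normSq
  set N : ℂ →L[ℝ] ℝ :=
    (w.re • Complex.reCLM + w.re • Complex.reCLM) +
      (w.im • Complex.imCLM + w.im • Complex.imCLM) with hN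
  have h1 : HasFDerivAt Complex.normSq N w := by
    have hre := (Complex.reCLM.hasFDerivAt (x := w)).mul
      (Complex.reCLM.hasFDerivAt (x := w))
    have him := (Complex.imCLM.hasFDerivAt (x := w)).mul
      (Complex.imCLM.hasFDerivAt (x := w))
    have := hre.add him
    have hf : (Complex.normSq : ℂ → ℝ) =
        ⇑Complex.reCLM * ⇑Complex.reCLM + ⇑Complex.imCLM * ⇑Complex.imCLM := by
      funext u; simp [Complex.normSq_apply]
    rw [hf]; exact this
  have h2 : HasFDerivAt (fun u : ℂ => 1 - Complex.normSq u) (-N) w :=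
    h1.const_sub 1
  have h3 : HasFDerivAt (fun u : ℂ => Real.sqrt (1 - Complex.normSq u))
      ((1 / (2 * s)) • (-N)) w :=
    (Real.hasDerivAt_sqrt hrpos.ne').comp_hasFDerivAt w h2
  have h4 : HasFDerivAt (fun u : ℂ => ((Real.sqrt (1 - Complex.normSq u) : ℝ) : ℂ))
      (Complex.ofRealCLM.comp ((1 / (2 * s)) • (-N))) w :=
    Complex.ofRealCLM.hasFDerivAt.comp w h3
  have hvd : HasFDerivAt v (fderiv ℝ v w) w :=
    ((hv w hw).differentiableAt (by simp)).hasFDerivAt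
  have hV : HasFDerivAt V
      (((s : ℝ) : ℂ) • fderiv ℝ v w +
        v w • (Complex.ofRealCLM.comp ((1 / (2 * s)) • (-N)))) w := h4.mul hvd
  have hfd : fderiv ℝ V w =
      ((s : ℝ) : ℂ) • fderiv ℝ v w +
        v w • (Complex.ofRealCLM.comp ((1 / (2 * s)) • (-N))) := hV.fderiv
  have hN1 : N 1 = 2 * w.re := by simp [hN]; ring
  have hNI : N Complex.I = 2 * w.im := by simp [hN]; ring
  have key := hann w hw
  rw [show ((1 : ℂ) - ‖w‖ ^ 2) = ((s : ℝ) : ℂ) ^ 2 by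
    norm_cast
    rw [hs2, hrdef, hns]] at key
  set D1 : ℂ := fderiv ℝ v w 1
  set DI : ℂ := fderiv ℝ v w Complex.I
  rw [hfd]
  simp only [ContinuousLinearMap.add_apply, ContinuousLinearMap.smul_apply,
    ContinuousLinearMap.comp_apply, ContinuousLinearMap.neg_apply, hN1, hNI,
    Complex.ofRealCLM_apply, smul_eq_mul]
  have hw' : ((w.re : ℂ)) + Complex.I * (w.im : ℂ) = w := by
    rw [mul_comm]; exact Complex.re_add_im w
  have hsne : ((s : ℝ) : ℂ) ≠ 0 := by
    exact_mod_cast Complex.ofReal_ne_zero.mpr hspos.ne'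
  push_cast
  field_simp
  linear_combination 2 * key - v w * hw'
end
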